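/- Let r(z) be the hyperbolic distance from i to z = x+iy as above. For every integer a ≥ 1 there is a polynomial P_a(x,y) of total degree at most 4a-2 such that ∂^a r/∂y^a = P_a(x,y) / (y^a · ((x²+y²+1)² - 4y²)^{a - 1/2}). -/

import Mathlib

open Real

/-- The hyperbolic distance from `i` to `x + iy`. -/
noncomputable def hypDist (x y : ℝ) : ℝ :=
  Real.log ((Real.sqrt (x ^ 2 + (y + 1) ^ 2) + Real.sqrt (x ^ 2 + (y - 1) ^ 2)) /
    (Real.sqrt (x ^ 2 + (y + 1) ^ 2) - Real.sqrt (x ^ 2 + (y - 1) ^ 2)))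

/-!
With `A = |z + i|` and `B = |z - i|` we have `A² - B² = 4y` and
`D := (x² + y² + 1)² - 4y² = A²B²`, so
`∂r/∂y = 2(A ∂B - B ∂A)/(A² - B²) = (y² - x² - 1)/(y √D)`.
Differentiating `P / (y^a D^(a - 1/2))` in `y` gives
`(y D ∂P - a D P - (a - 1/2) y (∂D) P) / (y^(a+1) D^(a + 1/2))`,
and since `D` has degree `4` the numerator has degree at most `deg P + 4`.
-/

open MvPolynomial Filter Topology

theorem HasDerivAt.log_add_div_sub {f g : ℝ → ℝ} {f' g' t : ℝ} (hf : HasDerivAt f f' t)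
    (hg : HasDerivAt g g' t) (hsum : f t + g t ≠ 0) (hdiff : f t - g t ≠ 0) :
    HasDerivAt (fun s => Real.log ((f s + g s) / (f s - g s)))
      (2 * (f t * g' - f' * g t) / (f t ^ 2 - g t ^ 2)) t := by
  refine (((hf.fun_add hg).fun_div (hf.fun_sub hg) hdiff).log
    (div_ne_zero hsum hdiff)).congr_deriv ?_
  have : f t ^ 2 - g t ^ 2 = (f t + g t) * (f t - g t) := by ring
  rw [this]
  field_simp
  ring

theorem hasDerivAt_sqrt_sq_add_sq (x c t : ℝ) (h : x ^ 2 + (t - c) ^ 2 ≠ 0) :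
    HasDerivAt (fun s => √(x ^ 2 + (s - c) ^ 2)) ((t - c) / √(x ^ 2 + (t - c) ^ 2)) t := by
  refine ((((hasDerivAt_id t).sub_const c).fun_pow 2).const_add (x ^ 2)).sqrt h
    |>.congr_deriv ?_
  norm_num
  field_simp

theorem HasDerivAt.div_pow_mul_rpow {f g : ℝ → ℝ} {f' g' y : ℝ} (hf : HasDerivAt f f' y)
    (hg : HasDerivAt g g' y) (hy : y ≠ 0) (hg₀ : 0 < g y) (a : ℕ) (s : ℝ) :
    HasDerivAt (fun t => f t / (t ^ a * g t ^ s))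
      ((y * g y * f' - a * g y * f y - s * y * g' * f y) / (y ^ (a + 1) * g y ^ (s + 1))) y := by
  have hpow : HasDerivAt (fun t => t ^ a) (a * y ^ a / y) y := by
    refine (hasDerivAt_pow a y).congr_deriv ?_
    rcases a with _ | a
    · simp
    · rw [Nat.add_sub_cancel, pow_succ]
      field_simp
  have hgs : 0 < g y ^ s := rpow_pos_of_pos hg₀ s
  refine (hf.fun_div (hpow.fun_mul (hg.rpow_const (p := s) (Or.inl hg₀.ne')))
    (by positivity)).congr_deriv ?_
  rw [rpow_sub_one hg₀.ne', rpow_add_one hg₀.ne']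
  field_simp
  ring

theorem MvPolynomial.totalDegree_pderiv_le {σ R : Type*} [CommSemiring R] (i : σ)
    (p : MvPolynomial σ R) : (pderiv i p).totalDegree ≤ p.totalDegree - 1 := by
  classical
  conv_lhs => rw [p.as_sum, map_sum]
  refine totalDegree_finsetSum_le fun m hm => ?_
  rw [pderiv_monomial]
  rcases Nat.eq_zero_or_pos (m i) with h | h
  · simp [h]
  · have hdeg := congrArg Finsupp.degree
      (tsub_add_cancel_of_le (Finsupp.single_le_iff.mpr h : Finsupp.single i 1 ≤ m))
    rw [map_add, Finsupp.degree_single] at hdeg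
    have hm : m.degree ≤ p.totalDegree := le_totalDegree hm
    refine (totalDegree_monomial_le _ _).trans ?_
    change (m - Finsupp.single i 1).degree ≤ _
    omega

theorem MvPolynomial.hasDerivAt_eval_vecCons_one (P : MvPolynomial (Fin 2) ℝ) (x y : ℝ) :
    HasDerivAt (fun t => eval ![x, t] P) (eval ![x, y] (pderiv 1 P)) y := by
  induction P using MvPolynomial.induction_on with
  | C a => simpa using hasDerivAt_const y a
  | add p q hp hq => simpa using hp.fun_add hq
  | mul_X p i hp =>
    fin_cases i
    · simpa [pderiv_mul, mul_comm] using hp.mul_const x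
    · simpa [pderiv_mul, mul_comm, add_comm] using hp.fun_mul (hasDerivAt_id y)

namespace hypDist

theorem sq_add_sub_one_sq_pos {x y : ℝ} (hxy : ¬(x = 0 ∧ y = 1)) :
    0 < x ^ 2 + (y - 1) ^ 2 := by
  rcases not_and_or.mp hxy with hx | hy
  · have : 0 < x ^ 2 := by positivity
    positivity
  · have : y - 1 ≠ 0 := sub_ne_zero.mpr hy
    positivity

theorem discr_eq_mul (x y : ℝ) :
    (x ^ 2 + y ^ 2 + 1) ^ 2 - 4 * y ^ 2 = (x ^ 2 + (y + 1) ^ 2) * (x ^ 2 + (y - 1) ^ 2) := by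
  ring

theorem discr_pos {x y : ℝ} (hy : 0 < y) (hxy : ¬(x = 0 ∧ y = 1)) :
    0 < (x ^ 2 + y ^ 2 + 1) ^ 2 - 4 * y ^ 2 := by
  rw [discr_eq_mul]
  have := sq_add_sub_one_sq_pos hxy
  positivity

theorem eventually_pos_and_not {x y : ℝ} (hy : 0 < y) (hxy : ¬(x = 0 ∧ y = 1)) :
    ∀ᶠ t in 𝓝 y, 0 < t ∧ ¬(x = 0 ∧ t = 1) :=
  ((isOpen_lt continuous_const continuous_id).inter
    (isClosed_const.inter (isClosed_eq continuous_id continuous_const)).isOpen_compl).mem_nhds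
    ⟨hy, hxy⟩

theorem hasDerivAt {x y : ℝ} (hy : 0 < y) (hxy : ¬(x = 0 ∧ y = 1)) :
    HasDerivAt (fun t => hypDist x t)
      ((y ^ 2 - x ^ 2 - 1) / (y * √((x ^ 2 + y ^ 2 + 1) ^ 2 - 4 * y ^ 2))) y := by
  have hA₀ : 0 < x ^ 2 + (y + 1) ^ 2 := by positivity
  have hB₀ := sq_add_sub_one_sq_pos hxy
  set A := √(x ^ 2 + (y + 1) ^ 2) with hA
  set B := √(x ^ 2 + (y - 1) ^ 2) with hB
  have hA2 : A ^ 2 = x ^ 2 + (y + 1) ^ 2 := sq_sqrt hA₀.le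
  have hB2 : B ^ 2 = x ^ 2 + (y - 1) ^ 2 := sq_sqrt hB₀.le
  have hApos : 0 < A := sqrt_pos.mpr hA₀
  have hBpos : 0 < B := sqrt_pos.mpr hB₀
  have hAB : A ^ 2 - B ^ 2 = 4 * y := by rw [hA2, hB2]; ring
  have hAB' : A - B ≠ 0 := by
    intro h
    nlinarith
  have hdA := hasDerivAt_sqrt_sq_add_sq x (-1) y (by simpa using hA₀.ne')
  have hdB := hasDerivAt_sqrt_sq_add_sq x 1 y hB₀.ne'
  simp only [sub_neg_eq_add] at hdA
  refine (HasDerivAt.log_add_div_sub hdA hdB (by positivity) hAB').congr_deriv ?_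
  rw [discr_eq_mul, sqrt_mul hA₀.le, hAB, ← hA, ← hB]
  field_simp
  rw [hA2, hB2]
  ring

noncomputable def discr : MvPolynomial (Fin 2) ℝ := (X 0 ^ 2 + X 1 ^ 2 + 1) ^ 2 - 4 * X 1 ^ 2

@[simp]
theorem eval_discr (x y : ℝ) : eval ![x, y] discr = (x ^ 2 + y ^ 2 + 1) ^ 2 - 4 * y ^ 2 := by
  simp [discr]

theorem totalDegree_discr_le : discr.totalDegree ≤ 4 := by
  rw [discr, ← map_ofNat C 4]
  grw [totalDegree_sub, totalDegree_pow, totalDegree_mul, totalDegree_add, totalDegree_add]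
  simp

noncomputable def derivStep (a : ℕ) (P : MvPolynomial (Fin 2) ℝ) : MvPolynomial (Fin 2) ℝ :=
  X 1 * discr * pderiv 1 P - C (a : ℝ) * discr * P -
    C ((a : ℝ) - 1 / 2) * X 1 * pderiv 1 discr * P

theorem totalDegree_derivStep_le (a : ℕ) {P : MvPolynomial (Fin 2) ℝ} {d : ℕ}
    (hP : P.totalDegree ≤ d) (hd : 1 ≤ d) : (derivStep a P).totalDegree ≤ d + 4 := by
  have h₁ := totalDegree_pderiv_le 1 P
  have h₂ := totalDegree_pderiv_le 1 discr
  have h₃ := totalDegree_discr_le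
  rw [derivStep]
  grw [totalDegree_sub, totalDegree_sub, totalDegree_mul, totalDegree_mul, totalDegree_mul,
    totalDegree_mul, totalDegree_mul, totalDegree_mul, totalDegree_mul]
  simp only [totalDegree_C, totalDegree_X]
  omega

theorem hasDerivAt_eval_div (a : ℕ) (P : MvPolynomial (Fin 2) ℝ) {x y : ℝ} (hy : 0 < y)
    (hD : 0 < (x ^ 2 + y ^ 2 + 1) ^ 2 - 4 * y ^ 2) :
    HasDerivAt
      (fun t => eval ![x, t] P /
        (t ^ a * ((x ^ 2 + t ^ 2 + 1) ^ 2 - 4 * t ^ 2) ^ ((a : ℝ) - 1 / 2)))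
      (eval ![x, y] (derivStep a P) /
        (y ^ (a + 1) * ((x ^ 2 + y ^ 2 + 1) ^ 2 - 4 * y ^ 2) ^ (((a + 1 : ℕ) : ℝ) - 1 / 2)))
      y := by
  have := (hasDerivAt_eval_vecCons_one P x y).div_pow_mul_rpow
    (hasDerivAt_eval_vecCons_one discr x y) hy.ne' (by rwa [eval_discr]) a ((a : ℝ) - 1 / 2)
  simp only [eval_discr] at this
  rw [show ((a + 1 : ℕ) : ℝ) - 1 / 2 = (a : ℝ) - 1 / 2 + 1 by push_cast; ring]
  convert this using 2
  simp [derivStep]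

end hypDist

theorem stmt_12 (a : ℕ) (ha : 1 ≤ a) :
    ∃ P : MvPolynomial (Fin 2) ℝ, P.totalDegree ≤ 4 * a - 2 ∧
      ∀ x y : ℝ, 0 < y → ¬(x = 0 ∧ y = 1) →
        iteratedDeriv a (fun y' => hypDist x y') y
          = MvPolynomial.eval ![x, y] P /
            (y ^ a * ((x ^ 2 + y ^ 2 + 1) ^ 2 - 4 * y ^ 2) ^ ((a : ℝ) - 1/2)) := by
  induction a, ha using Nat.le_induction with
  | base =>
    refine ⟨X 1 ^ 2 - X 0 ^ 2 - 1, ?_, fun x y hy hxy => ?_⟩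
    · grw [totalDegree_sub, totalDegree_sub]
      simp
    · rw [iteratedDeriv_one, (hypDist.hasDerivAt hy hxy).deriv, sqrt_eq_rpow]
      norm_num
  | succ a ha ih =>
    obtain ⟨P, hPdeg, hP⟩ := ih
    refine ⟨hypDist.derivStep a P, ?_, fun x y hy hxy => ?_⟩
    · grw [hypDist.totalDegree_derivStep_le a hPdeg (by omega)]
      omega
    · have hloc : iteratedDeriv a (fun t => hypDist x t) =ᶠ[𝓝 y] fun t => eval ![x, t] P /
          (t ^ a * ((x ^ 2 + t ^ 2 + 1) ^ 2 - 4 * t ^ 2) ^ ((a : ℝ) - 1 / 2)) :=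
        (hypDist.eventually_pos_and_not hy hxy).mono fun t ht => hP x t ht.1 ht.2
      rw [iteratedDeriv_succ, hloc.deriv_eq,
        (hypDist.hasDerivAt_eval_div a P hy (hypDist.discr_pos hy hxy)).deriv]
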